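/- Let (α_y)_{y∈ℤ, y≤1} be a probability distribution on the integers y ≤ 1, and let (c_y)_{y≤1} be nonnegative integers with c_y ≥ 1 if and only if α_y > 0. Let ((Y_j, C_j))_{j≥1} be i.i.d. random pairs in ℤ×ℕ with P(Y_j = y, C_j = k) = α_y/c_y for 1 ≤ k ≤ c_y, and set X_1 = −1 and X_i = −1 + Σ_{j=1}^{i−1} Y_j. Fix h ≥ 1 and a subset A ⊆ (ℤ×ℕ)^h, and let N_n = Σ_{j=1}^{n−h+1} 1{ ((Y_j,C_j),…,(Y_{j+h−1},C_{j+h−1})) ∈ A }. For every n such that both events E_n = {X_j ≥ 0 for all 2 ≤ j ≤ n} ∩ {X_{n+1} = 0} and F_n = {X_{n+1} = 0} have positive probability, there exists a coupling (U, V) on a common probability space such that U is distributed as the conditional law of N_n given E_n, V is distributed as the conditional law of N_n given F_n, and |U − V| ≤ 2h almost surely. -/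

import Mathlib

open MeasureTheory ProbabilityTheory Filter
open scoped Classical ENNReal Topology
open Fin.NatCast


lemma cycle_abstract (n : ℕ) (hn : 0 < n) (T : ℕ → ℤ)
    (hper : ∀ m, T (m + n) = T m + 1) :
    ∃! k, k < n ∧ ∀ t, k + 1 ≤ t → t ≤ k + n → T k + 1 ≤ T t := by
  have key : ∀ k k', (k < n ∧ ∀ t, k + 1 ≤ t → t ≤ k + n → T k + 1 ≤ T t) →
      (k' < n ∧ ∀ t, k' + 1 ≤ t → t ≤ k' + n → T k' + 1 ≤ T t) → k < k' → False := by
    rintro k k' ⟨hk, hQ⟩ ⟨hk', hQ'⟩ hlt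
    have h1 : T k + 1 ≤ T k' := hQ k' (by omega) (by omega)
    have h2 : T k' + 1 ≤ T (k + n) := hQ' (k + n) (by omega) (by omega)
    rw [hper k] at h2
    omega
  classical
  set Fm := (Finset.range n).filter (fun j => ∀ i ∈ Finset.range n, T j ≤ T i) with hFm
  have hne : Fm.Nonempty := by
    obtain ⟨j, hj, hjmin⟩ := Finset.exists_min_image (Finset.range n) T
      ⟨0, Finset.mem_range.2 hn⟩
    exact ⟨j, Finset.mem_filter.2 ⟨hj, hjmin⟩⟩
  obtain ⟨k, hkn, hkmin, hkmax⟩ : ∃ k, k < n ∧ (∀ i ∈ Finset.range n, T k ≤ T i) ∧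
      ∀ j ∈ Fm, j ≤ k := by
    refine ⟨Fm.max' hne, ?_, ?_, fun j hj => Finset.le_max' _ j hj⟩
    · exact Finset.mem_range.1 (Finset.mem_filter.1 (Fm.max'_mem hne)).1
    · exact (Finset.mem_filter.1 (Fm.max'_mem hne)).2
  have hstrict : ∀ j, k < j → j < n → T k + 1 ≤ T j := by
    intro j hj hjn
    by_contra hc
    push_neg at hc
    have hj' : ∀ i ∈ Finset.range n, T j ≤ T i := by
      intro i hi
      have := hkmin i hi
      omega
    have : j ≤ k := hkmax j (Finset.mem_filter.2 ⟨Finset.mem_range.2 hjn, hj'⟩)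
    omega
  have hQk : ∀ t, k + 1 ≤ t → t ≤ k + n → T k + 1 ≤ T t := by
    intro t ht1 ht2
    rcases lt_or_ge t n with hh | hh
    · exact hstrict t (by omega) hh
    · have ht' : t - n + n = t := by omega
      have h1 := hkmin (t - n) (Finset.mem_range.2 (by omega))
      have h2 := hper (t - n)
      rw [ht'] at h2
      omega
  refine ⟨k, ⟨hkn, hQk⟩, ?_⟩
  intro k' hk'
  rcases lt_trichotomy k' k with hc | hc | hc
  · exact absurd (key k' k hk' ⟨hkn, hQk⟩ hc) (by simp)
  · exact hc
  · exact absurd (key k k' ⟨hkn, hQk⟩ hk' hc) (by simp)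

namespace Stmt4Aux

variable {n : ℕ} [NeZero n]

def rotF (k : Fin n) (s : Fin n → ℤ × ℕ) : Fin n → ℤ × ℕ := fun j => s (j + k)

lemma rot_apply (k : Fin n) (s : Fin n → ℤ × ℕ) (i : ℕ) :
    rotF k s ((i : Fin n)) = s (((i + k.val : ℕ) : Fin n)) := by
  simp only [rotF, Nat.cast_add, Fin.cast_val_eq_self]

def psum (s : Fin n → ℤ × ℕ) (m : ℕ) : ℤ := ∑ i ∈ Finset.range m, (s ((i : Fin n))).1

lemma psum_add (s : Fin n → ℤ × ℕ) (a m : ℕ) :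
    psum s (a + m) - psum s a = ∑ i ∈ Finset.range m, (s (((a + i : ℕ) : Fin n))).1 := by
  rw [psum, psum, ← Finset.sum_Ico_eq_sub _ (Nat.le_add_right a m),
    Finset.sum_Ico_eq_sum_range]
  simp

lemma psum_rot (k : Fin n) (s : Fin n → ℤ × ℕ) (m : ℕ) :
    psum (rotF k s) m = psum s (k.val + m) - psum s k.val := by
  rw [psum_add]
  unfold psum
  refine Finset.sum_congr rfl fun i _ => ?_
  rw [rot_apply, Nat.add_comm k.val i]

lemma psum_period (s : Fin n → ℤ × ℕ) (m : ℕ) :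
    psum s (m + n) = psum s m + psum s n := by
  have h1 := psum_add s m n
  have h2 : ∑ i ∈ Finset.range n, (s (((m + i : ℕ) : Fin n))).1
      = ∑ i ∈ Finset.range n, (s ((i : Fin n))).1 := by
    rw [← Fin.sum_univ_eq_sum_range (fun i => (s (((m + i : ℕ) : Fin n))).1) n,
      ← Fin.sum_univ_eq_sum_range (fun i => (s ((i : Fin n))).1) n]
    simp only [Nat.cast_add, Fin.cast_val_eq_self]
    exact Fintype.sum_equiv (Equiv.addLeft ((m : Fin n))) _ _ fun i => rfl
  rw [h2] at h1
  change psum s (m + n) - psum s m = psum s n at h1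
  omega

def windowC (h : ℕ) (s : Fin n → ℤ × ℕ) (j : ℕ) : Fin h → ℤ × ℕ :=
  fun t => s (((j + t.val : ℕ) : Fin n))

lemma windowC_rot (h : ℕ) (k : Fin n) (s : Fin n → ℤ × ℕ) (j : ℕ) :
    windowC h (rotF k s) j = windowC h s (j + k.val) := by
  funext t
  simp only [windowC, rot_apply]
  congr 1
  congr 1
  omega

lemma windowC_mod (h : ℕ) (s : Fin n → ℤ × ℕ) (j : ℕ) :
    windowC h s j = windowC h s (j % n) := by
  funext t
  simp only [windowC]
  congr 1
  rw [Fin.ext_iff, Fin.val_natCast, Fin.val_natCast]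
  exact ((Nat.mod_modEq j n).add_right t.val).symm

noncomputable def NZf (h : ℕ) (A : Set (Fin h → ℤ × ℕ)) (s : Fin n → ℤ × ℕ) : ℤ :=
  ∑ j ∈ Finset.range (n + 1 - h), if windowC h s j ∈ A then 1 else 0

lemma NZf_rot_bound (h : ℕ) (hh : 1 ≤ h) (A : Set (Fin h → ℤ × ℕ)) (k : Fin n)
    (s : Fin n → ℤ × ℕ) : |NZf h A (rotF k s) - NZf h A s| ≤ 2 * (h : ℤ) := by
  have hn : 0 < n := Nat.pos_of_ne_zero (NeZero.ne n)
  rcases Nat.eq_zero_or_pos (n + 1 - h) with h0 | hpos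
  · simp [NZf, h0]
  have hhn : h ≤ n := by omega
  set f : ℕ → ℤ := fun j => if windowC h s j ∈ A then 1 else 0 with hf
  have hf0 : ∀ j, 0 ≤ f j := fun j => by rw [hf]; positivity
  have hf1 : ∀ j, f j ≤ 1 := fun j => by rw [hf]; dsimp only; split <;> omega
  have hfmod : ∀ j, f (j % n) = f j := fun j => by
    rw [hf]; dsimp only; rw [← windowC_mod]
  set J0 : Finset ℕ := Finset.range (n + 1 - h) with hJ0
  set Jk : Finset ℕ := J0.image (fun j => (j + k.val) % n) with hJk
  have hinj : ∀ a ∈ J0, ∀ b ∈ J0, (a + k.val) % n = (b + k.val) % n → a = b := by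
    intro a ha b hb hab
    rw [hJ0, Finset.mem_range] at ha hb
    have : a ≡ b [MOD n] := Nat.ModEq.add_right_cancel' k.val hab
    rw [Nat.ModEq] at this
    rw [Nat.mod_eq_of_lt (by omega), Nat.mod_eq_of_lt (by omega)] at this
    exact this
  have hrot : NZf h A (rotF k s) = ∑ j ∈ Jk, f j := by
    rw [hJk, Finset.sum_image hinj, NZf]
    refine Finset.sum_congr rfl fun j _ => ?_
    rw [hfmod, hf]
    dsimp only
    rw [windowC_rot]
  have hid : NZf h A s = ∑ j ∈ J0, f j := rfl
  -- set difference decomposition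
  have hsub : ∀ (B : Finset ℕ), B ⊆ Finset.range n → (∑ j ∈ B, f j) - (∑ j ∈ J0, f j)
      = (∑ j ∈ B \ J0, f j) - (∑ j ∈ J0 \ B, f j) := by
    intro B _
    have e1 : ∑ j ∈ B ∩ J0, f j + ∑ j ∈ B \ J0, f j = ∑ j ∈ B, f j :=
      Finset.sum_inter_add_sum_sdiff B J0 f
    have e2 : ∑ j ∈ J0 ∩ B, f j + ∑ j ∈ J0 \ B, f j = ∑ j ∈ J0, f j :=
      Finset.sum_inter_add_sum_sdiff J0 B f
    rw [Finset.inter_comm] at e2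
    omega
  have hJksub : Jk ⊆ Finset.range n := by
    intro x hx
    rw [hJk, Finset.mem_image] at hx
    obtain ⟨a, _, rfl⟩ := hx
    exact Finset.mem_range.2 (Nat.mod_lt _ hn)
  have hJ0sub : J0 ⊆ Finset.range n := by
    rw [hJ0]
    exact Finset.range_subset_range.2 (by omega)
  have hJkcard : Jk.card = n + 1 - h := by
    rw [hJk, Finset.card_image_of_injOn (fun a ha b hb hab => hinj a ha b hb hab), hJ0,
      Finset.card_range]
  have hJ0card : J0.card = n + 1 - h := by rw [hJ0, Finset.card_range]
  have hcard : ∀ (B C : Finset ℕ), C.card = n + 1 - h → C ⊆ Finset.range n →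
      B ⊆ Finset.range n \ C → (∑ j ∈ B, f j) ≤ (h : ℤ) - 1 := by
    intro B C hCcard hC hB
    calc (∑ j ∈ B, f j) ≤ ∑ j ∈ B, 1 := Finset.sum_le_sum fun j _ => hf1 j
    _ = (B.card : ℤ) := by simp
    _ ≤ ((Finset.range n \ C).card : ℤ) := by
        exact_mod_cast Nat.cast_le.2 (Finset.card_le_card hB)
    _ ≤ (h : ℤ) - 1 := by
        rw [Finset.card_sdiff_of_subset hC, Finset.card_range, hCcard]
        omega
  have hb1 : (∑ j ∈ Jk \ J0, f j) ≤ (h : ℤ) - 1 :=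
    hcard _ J0 hJ0card hJ0sub
      (by intro x hx; rw [Finset.mem_sdiff] at hx ⊢; exact ⟨hJksub hx.1, hx.2⟩)
  have hb2 : (∑ j ∈ J0 \ Jk, f j) ≤ (h : ℤ) - 1 :=
    hcard _ Jk hJkcard hJksub
      (by intro x hx; rw [Finset.mem_sdiff] at hx ⊢; exact ⟨hJ0sub hx.1, hx.2⟩)
  have hnn1 : 0 ≤ ∑ j ∈ Jk \ J0, f j := Finset.sum_nonneg fun j _ => hf0 j
  have hnn2 : 0 ≤ ∑ j ∈ J0 \ Jk, f j := Finset.sum_nonneg fun j _ => hf0 j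
  rw [hrot, hid, hsub Jk hJksub, abs_sub_le_iff]
  constructor <;> omega

end Stmt4Aux

namespace Stmt4Aux
variable {n : ℕ} [NeZero n]

def fSet (n : ℕ) [NeZero n] : Set (Fin n → ℤ × ℕ) := {s | psum s n = 1}

def eSet (n : ℕ) [NeZero n] : Set (Fin n → ℤ × ℕ) :=
  {s | psum s n = 1 ∧ ∀ m, 1 ≤ m → m ≤ n → 1 ≤ psum s m}

lemma eSet_subset_fSet : eSet n ⊆ fSet n := fun _ hs => hs.1

lemma rot_mem_fSet_iff (k : Fin n) (s : Fin n → ℤ × ℕ) :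
    rotF k s ∈ fSet n ↔ s ∈ fSet n := by
  simp only [fSet, Set.mem_setOf_eq, psum_rot]
  rw [psum_period]
  omega

lemma rot_mem_eSet_iff (s : Fin n → ℤ × ℕ) (hs : s ∈ fSet n) (k : Fin n) :
    rotF k s ∈ eSet n ↔
      ∀ t, k.val + 1 ≤ t → t ≤ k.val + n → psum s k.val + 1 ≤ psum s t := by
  have hs' : psum s n = 1 := hs
  constructor
  · rintro ⟨h1, h2⟩ t ht1 ht2
    have h3 := h2 (t - k.val) (by omega) (by omega)
    rw [psum_rot, show k.val + (t - k.val) = t from by omega] at h3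
    omega
  · intro hQ
    have hfirst : psum (rotF k s) n = 1 := by
      rw [psum_rot, psum_period]
      omega
    refine ⟨hfirst, fun m hm1 hm2 => ?_⟩
    rw [psum_rot]
    have := hQ (k.val + m) (by omega) (by omega)
    omega

lemma exists_unique_rot (s : Fin n → ℤ × ℕ) (hs : s ∈ fSet n) :
    ∃! k : Fin n, rotF k s ∈ eSet n := by
  have hn : 0 < n := Nat.pos_of_ne_zero (NeZero.ne n)
  have hper : ∀ m, psum s (m + n) = psum s m + 1 := fun m => by
    rw [psum_period]; have hs' : psum s n = 1 := hs; omega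
  obtain ⟨k0, ⟨hk0n, hQ⟩, huniq⟩ := cycle_abstract n hn (psum s) hper
  refine ⟨⟨k0, hk0n⟩, (rot_mem_eSet_iff s hs _).2 hQ, fun k' hk' => ?_⟩
  exact Fin.ext (huniq k'.val ⟨k'.isLt, (rot_mem_eSet_iff s hs k').1 hk'⟩)

end Stmt4Aux

namespace Stmt4Aux

noncomputable def qfun (α : ℤ → ℝ) (col : ℤ → ℕ) (p : ℤ × ℕ) : ℝ≥0∞ :=
  ENNReal.ofReal (if 1 ≤ p.2 ∧ p.2 ≤ col p.1 then α p.1 / (col p.1 : ℝ) else 0)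

end Stmt4Aux

open Stmt4Aux

/-- Cycle-lemma coupling step: the conditional law of the number `N n` of consecutive
occurrences of a family `A` of colored increments, given that the walk stays nonnegative on
`[2,n]` and ends at `0` at time `n+1`, can be coupled with its conditional law given only the
endpoint event `{X_{n+1} = 0}`, so that the two copies differ by at most `2h` almost surely.
The coupling is presented as a probability measure on `ℤ × ℤ` with the two prescribed
marginals. -/
theorem stmt4
    {Ω : Type*} [MeasurableSpace Ω] (P : Measure Ω) [IsProbabilityMeasure P]
    (α : ℤ → ℝ)
    (hα_nonneg : ∀ y, 0 ≤ α y)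
    (hα_supp : ∀ y : ℤ, 1 < y → α y = 0)
    (hα_total : ∑' y : ℤ, α y = 1)
    (col : ℤ → ℕ) (hcol : ∀ y, 1 ≤ col y ↔ 0 < α y)
    (Y : ℕ → Ω → ℤ) (C : ℕ → Ω → ℕ)
    (hY_meas : ∀ j, Measurable (Y j)) (hC_meas : ∀ j, Measurable (C j))
    (hYC_law : ∀ (j : ℕ) (y : ℤ) (k : ℕ),
      P {ω | Y j ω = y ∧ C j ω = k} =
        ENNReal.ofReal (if 1 ≤ k ∧ k ≤ col y then α y / (col y : ℝ) else 0))
    (hYC_indep : ∀ (s : Finset ℕ) (y : ℕ → ℤ) (k : ℕ → ℕ),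
      P {ω | ∀ j ∈ s, Y j ω = y j ∧ C j ω = k j} =
        ∏ j ∈ s, P {ω | Y j ω = y j ∧ C j ω = k j})
    (X : ℕ → Ω → ℤ)
    (hX : ∀ i ω, X i ω = -1 + ∑ j ∈ Finset.range (i - 1), Y j ω)
    (h : ℕ) (hh : 1 ≤ h) (A : Set (Fin h → ℤ × ℕ))
    (N : ℕ → Ω → ℕ)
    (hN : ∀ n ω, N n ω = ∑ j ∈ Finset.range (n + 1 - h),
      if (fun t : Fin h => (Y (j + (t : ℕ)) ω, C (j + (t : ℕ)) ω)) ∈ A then 1 else 0)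
    (E F : ℕ → Set Ω)
    (hE : ∀ n, E n = {ω | (∀ j, 2 ≤ j → j ≤ n → 0 ≤ X j ω) ∧ X (n + 1) ω = 0})
    (hF : ∀ n, F n = {ω | X (n + 1) ω = 0})
    (n : ℕ) (hEn : 0 < P (E n)) (hFn : 0 < P (F n)) :
    ∃ P' : Measure (ℤ × ℤ), IsProbabilityMeasure P' ∧
      P'.map Prod.fst = (P[|E n]).map (fun ω => (N n ω : ℤ)) ∧
      P'.map Prod.snd = (P[|F n]).map (fun ω => (N n ω : ℤ)) ∧
      ∀ᵐ z ∂P', |z.1 - z.2| ≤ 2 * (h : ℤ) := by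
  classical
  -- n is positive
  have hn : 0 < n := by
    rcases Nat.eq_zero_or_pos n with rfl | hp
    · exfalso
      have hF0 : F 0 = (∅ : Set Ω) := by
        rw [hF]
        ext ω
        simp [hX]
      rw [hF0] at hFn
      simp at hFn
    · exact hp
  haveI : NeZero n := ⟨hn.ne'⟩
  set T : Ω → (Fin n → ℤ × ℕ) := fun ω j => (Y j ω, C j ω) with hT
  have hTmeas : Measurable T :=
    measurable_pi_lambda _ fun j => (hY_meas j).prodMk (hC_meas j)
  have msS : ∀ B : Set (Fin n → ℤ × ℕ), MeasurableSet B :=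
    fun B => (Set.to_countable B).measurableSet
  set μ := P.map T with hμ
  haveI : IsProbabilityMeasure μ := Measure.isProbabilityMeasure_map hTmeas.aemeasurable
  -- partial sums transfer
  have hpsum_eq : ∀ (ω : Ω) (m : ℕ), m ≤ n →
      psum (T ω) m = ∑ j ∈ Finset.range m, Y j ω := by
    intro ω m hm
    show ∑ i ∈ Finset.range m, ((T ω) ((i : Fin n))).1 = ∑ j ∈ Finset.range m, Y j ω
    refine Finset.sum_congr rfl fun i hi => ?_
    have hi' : i < n := lt_of_lt_of_le (Finset.mem_range.1 hi) hm
    have hv : ((i : ℕ) : Fin n).val = i := by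
      rw [Fin.val_natCast]; exact Nat.mod_eq_of_lt hi'
    simp only [hT]
    rw [hv]
  -- event identifications
  have hFset : F n = T ⁻¹' (fSet n) := by
    rw [hF]
    ext ω
    simp only [Set.mem_setOf_eq, Set.mem_preimage]
    have hx := hX (n + 1) ω
    simp only [Nat.add_sub_cancel] at hx
    have hp := hpsum_eq ω n le_rfl
    change X (n + 1) ω = 0 ↔ psum (T ω) n = 1
    omega
  have hEset : E n = T ⁻¹' (eSet n) := by
    rw [hE]
    ext ω
    simp only [Set.mem_setOf_eq, Set.mem_preimage]
    change (∀ j, 2 ≤ j → j ≤ n → 0 ≤ X j ω) ∧ X (n + 1) ω = 0 ↔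
      (psum (T ω) n = 1 ∧ ∀ m, 1 ≤ m → m ≤ n → 1 ≤ psum (T ω) m)
    have hx := hX (n + 1) ω
    simp only [Nat.add_sub_cancel] at hx
    have hpn := hpsum_eq ω n le_rfl
    constructor
    · rintro ⟨hall, hend⟩
      have h1 : psum (T ω) n = 1 := by omega
      refine ⟨h1, fun m hm1 hm2 => ?_⟩
      rcases eq_or_lt_of_le hm2 with rfl | hmn
      · omega
      · have h2 := hall (m + 1) (by omega) (by omega)
        have hxm := hX (m + 1) ω
        simp only [Nat.add_sub_cancel] at hxm
        have hpm := hpsum_eq ω m (by omega)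
        omega
    · rintro ⟨h1, hall⟩
      constructor
      · intro j hj2 hjn
        have hxj := hX j ω
        have hpj := hpsum_eq ω (j - 1) (by omega)
        have h2 := hall (j - 1) (by omega) (by omega)
        omega
      · omega
  -- N transfer
  have hNeq : ∀ ω, ((N n ω : ℤ)) = NZf h A (T ω) := by
    intro ω
    rw [hN]
    show _ = ∑ j ∈ Finset.range (n + 1 - h),
      (if windowC h (T ω) j ∈ A then (1 : ℤ) else 0)
    push_cast
    refine Finset.sum_congr rfl fun j hj => ?_
    have hj' : j < n + 1 - h := Finset.mem_range.1 hj
    have hw : windowC h (T ω) j =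
        fun t : Fin h => (Y (j + (t : ℕ)) ω, C (j + (t : ℕ)) ω) := by
      funext t
      have hlt : j + t.val < n := by have := t.isLt; omega
      show T ω (((j + t.val : ℕ) : Fin n)) = _
      have hv : (((j + t.val : ℕ)) : Fin n).val = j + t.val := by
        rw [Fin.val_natCast]; exact Nat.mod_eq_of_lt hlt
      simp only [hT]
      rw [hv]
    rw [hw]
  -- singleton formula
  have hsingle : ∀ s₀ : Fin n → ℤ × ℕ, μ {s₀} = ∏ i : Fin n, qfun α col (s₀ i) := by
    intro s₀
    rw [hμ, Measure.map_apply hTmeas (msS _)]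
    have hpre : T ⁻¹' {s₀} = {ω | ∀ j ∈ Finset.range n,
        Y j ω = (s₀ ((j : Fin n))).1 ∧ C j ω = (s₀ ((j : Fin n))).2} := by
      ext ω
      simp only [Set.mem_preimage, Set.mem_singleton_iff, Set.mem_setOf_eq, Finset.mem_range]
      constructor
      · intro hωs j hj
        have h1 := congrFun hωs ((j : Fin n))
        simp only [hT] at h1
        have hv : ((j : ℕ) : Fin n).val = j := by
          rw [Fin.val_natCast]; exact Nat.mod_eq_of_lt hj
        rw [hv] at h1
        constructor
        · rw [← h1]
        · rw [← h1]
      · intro hall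
        funext i
        have h1 := hall i.val i.isLt
        rw [Fin.cast_val_eq_self] at h1
        simp only [hT]
        exact Prod.ext h1.1 h1.2
    rw [hpre, hYC_indep (Finset.range n) (fun j => (s₀ ((j : Fin n))).1)
      (fun j => (s₀ ((j : Fin n))).2),
      ← Fin.prod_univ_eq_prod_range
        (fun j => P {ω | Y j ω = (s₀ ((j : Fin n))).1 ∧ C j ω = (s₀ ((j : Fin n))).2}) n]
    refine Finset.prod_congr rfl fun i _ => ?_
    rw [hYC_law]
    simp [qfun, Fin.cast_val_eq_self]
  -- rotation invariance
  have hrotinv : ∀ (k : Fin n) (B : Set (Fin n → ℤ × ℕ)), μ ((rotF k) ⁻¹' B) = μ B := by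
    have hmap : ∀ k : Fin n, μ.map (rotF k) = μ := by
      intro k
      refine Measure.ext_of_singleton fun s₀ => ?_
      rw [Measure.map_apply (measurable_of_countable _) (msS _)]
      have hpre : (rotF k) ⁻¹' {s₀} = {fun j => s₀ (j - k)} := by
        ext s
        simp only [Set.mem_preimage, Set.mem_singleton_iff]
        constructor
        · intro hs
          funext j
          have h1 := congrFun hs (j - k)
          simp only [rotF] at h1
          rw [sub_add_cancel] at h1
          exact h1
        · intro hs
          funext j
          rw [hs]
          simp only [rotF]
          rw [add_sub_cancel_right]
      rw [hpre, hsingle, hsingle]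
      exact Fintype.prod_equiv (Equiv.subRight k) _ _ fun i => rfl
    intro k B
    rw [← Measure.map_apply (measurable_of_countable _) (msS B), hmap]
  -- conditioning commutes with the map T
  have hcondmap : ∀ B : Set (Fin n → ℤ × ℕ), (P[|T ⁻¹' B]).map T = μ[|B] := by
    intro B
    show ((P (T ⁻¹' B))⁻¹ • P.restrict (T ⁻¹' B)).map T = (μ B)⁻¹ • μ.restrict B
    rw [Measure.map_smul, ← Measure.restrict_map hTmeas (msS B), ← hμ,
      show P (T ⁻¹' B) = μ B from by rw [hμ, Measure.map_apply hTmeas (msS B)]]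
  -- choice of the good rotation
  set r : (Fin n → ℤ × ℕ) → Fin n := fun s =>
    if hs : ∃ k : Fin n, rotF k s ∈ eSet n then hs.choose else 0 with hr
  set Φ : (Fin n → ℤ × ℕ) → (Fin n → ℤ × ℕ) := fun s => rotF (r s) s with hΦ
  have hΦe : ∀ s ∈ fSet n, Φ s ∈ eSet n := by
    intro s hs
    obtain ⟨k, hk, -⟩ := exists_unique_rot s hs
    show rotF (r s) s ∈ eSet n
    rw [hr]
    dsimp only
    rw [dif_pos ⟨k, hk⟩]
    exact (⟨k, hk⟩ : ∃ k : Fin n, rotF k s ∈ eSet n).choose_spec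
  have hrspec : ∀ s ∈ fSet n, ∀ k : Fin n, rotF k s ∈ eSet n → r s = k := by
    intro s hs k hk
    obtain ⟨k', -, huniq⟩ := exists_unique_rot s hs
    rw [huniq (r s) (hΦe s hs), huniq k hk]
  -- the key identity
  have hkey : ∀ B : Set (Fin n → ℤ × ℕ),
      μ (fSet n ∩ Φ ⁻¹' B) = n * μ (eSet n ∩ B) := by
    intro B
    have h1 : fSet n ∩ Φ ⁻¹' B = ⋃ k : Fin n, (fSet n ∩ (rotF k) ⁻¹' (eSet n ∩ B)) := by
      ext s
      simp only [Set.mem_inter_iff, Set.mem_preimage, Set.mem_iUnion]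
      constructor
      · rintro ⟨hsf, hsB⟩
        exact ⟨r s, hsf, hΦe s hsf, hsB⟩
      · rintro ⟨k, hsf, hke, hkB⟩
        refine ⟨hsf, ?_⟩
        have hrk : r s = k := hrspec s hsf k hke
        show Φ s ∈ B
        rw [hΦ]
        dsimp only
        rw [hrk]
        exact hkB
    have h2 : Pairwise (Function.onFun Disjoint
        fun k : Fin n => fSet n ∩ (rotF k) ⁻¹' (eSet n ∩ B)) := by
      intro k k' hkk'
      rw [Function.onFun, Set.disjoint_left]
      rintro s ⟨hsf, hke⟩ ⟨-, hk'e⟩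
      exact hkk' ((hrspec s hsf k hke.1).symm.trans (hrspec s hsf k' hk'e.1))
    have h3 : ∀ k : Fin n,
        μ (fSet n ∩ (rotF k) ⁻¹' (eSet n ∩ B)) = μ (eSet n ∩ B) := by
      intro k
      have he1 : fSet n ∩ (rotF k) ⁻¹' (eSet n ∩ B)
          = (rotF k) ⁻¹' (fSet n ∩ (eSet n ∩ B)) := by
        ext s
        simp only [Set.mem_inter_iff, Set.mem_preimage]
        rw [← rot_mem_fSet_iff k s]
      have he2 : fSet n ∩ (eSet n ∩ B) = eSet n ∩ B :=
        Set.inter_eq_self_of_subset_right (fun s hs => eSet_subset_fSet hs.1)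
      rw [he1, hrotinv, he2]
    rw [h1, measure_iUnion h2 (fun k => msS _), tsum_fintype]
    simp only [h3]
    rw [Finset.sum_const, Finset.card_univ, Fintype.card_fin, nsmul_eq_mul]
  -- positivity facts
  have hμe : μ (eSet n) = P (E n) := by
    rw [hμ, Measure.map_apply hTmeas (msS _), ← hEset]
  have hμf : μ (fSet n) = P (F n) := by
    rw [hμ, Measure.map_apply hTmeas (msS _), ← hFset]
  have hμf_eq : μ (fSet n) = n * μ (eSet n) := by
    have hk := hkey Set.univ
    simpa using hk
  have hμe0 : μ (eSet n) ≠ 0 := by rw [hμe]; exact hEn.ne'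
  have hμetop : μ (eSet n) ≠ ⊤ := measure_ne_top μ _
  have hμf0 : μ (fSet n) ≠ 0 := by rw [hμf]; exact hFn.ne'
  have hnne : (n : ℝ≥0∞) ≠ 0 := Nat.cast_ne_zero.2 hn.ne'
  have hntop : (n : ℝ≥0∞) ≠ ⊤ := ENNReal.natCast_ne_top n
  set ν := μ[|fSet n] with hν
  haveI : IsProbabilityMeasure ν := cond_isProbabilityMeasure hμf0
  -- the law of the rotated configuration
  have hνmap : ν.map Φ = μ[|eSet n] := by
    refine Measure.ext fun B hB => ?_
    rw [Measure.map_apply (measurable_of_countable _) hB, hν,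
      cond_apply (msS (fSet n)) μ, cond_apply (msS (eSet n)) μ, hkey B, hμf_eq,
      ENNReal.mul_inv (Or.inl hnne) (Or.inl hntop), mul_mul_mul_comm,
      ENNReal.inv_mul_cancel hnne hntop, one_mul]
  -- assembling the coupling
  set g : (Fin n → ℤ × ℕ) → ℤ × ℤ := fun s => (NZf h A (Φ s), NZf h A s) with hg
  refine ⟨ν.map g, ?_, ?_, ?_, ?_⟩
  · exact Measure.isProbabilityMeasure_map (measurable_of_countable g).aemeasurable
  · rw [hEset, show (fun ω => ((N n ω : ℤ))) = (NZf h A) ∘ T from funext hNeq,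
      ← Measure.map_map (measurable_of_countable (NZf h A)) hTmeas, hcondmap,
      Measure.map_map measurable_fst (measurable_of_countable g),
      show (Prod.fst ∘ g) = (NZf h A) ∘ Φ from rfl,
      ← Measure.map_map (measurable_of_countable (NZf h A)) (measurable_of_countable Φ),
      hνmap]
  · rw [hFset, show (fun ω => ((N n ω : ℤ))) = (NZf h A) ∘ T from funext hNeq,
      ← Measure.map_map (measurable_of_countable (NZf h A)) hTmeas, hcondmap,
      Measure.map_map measurable_snd (measurable_of_countable g),
      show (Prod.snd ∘ g) = NZf h A from rfl, hν]
  · have hset : MeasurableSet {z : ℤ × ℤ | |z.1 - z.2| ≤ 2 * (h : ℤ)} :=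
      (Set.to_countable _).measurableSet
    refine (ae_map_iff (measurable_of_countable g).aemeasurable hset).2
      (ae_of_all _ fun s => ?_)
    exact NZf_rot_bound h hh A (r s) s
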